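/- arXiv:gr-qc/9308028 — 2 statements merged into one kernel-verified Lean document; each statement's English description precedes it below -/
import Mathlib

section
/- Let R be a reduced crystallographic root system in a finite-dimensional real inner product space E, let S be a base of R, and let H lie in the open fundamental Weyl chamber K(S). Then the set S(H) = {α ∈ R : ⟨α, H⟩ = 2} is linearly independent in E. -/
/-!
If two roots `α ≠ β` satisfy `⟪α, β⟫ > 0`, one of their Cartan numbers is `1`, so `α - β` is a
root. For `H` in the open chamber no root is orthogonal to `H`, since every root is a nonzero
combination of simple roots with coefficients of one sign. Hence two distinct roots with
`⟪α, H⟫ = ⟪β, H⟫ = 2` satisfy `⟪α, β⟫ ≤ 0`, and vectors on one side of a hyperplane with pairwise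
nonpositive inner products are linearly independent.
-/

open scoped RealInnerProductSpace

/-- A reduced crystallographic root system in a real inner product space `E`:
a finite set of nonzero vectors, with integral Cartan numbers, closed under the
reflections it defines, and such that the only multiples of a root `α` that are
roots are `±α`. -/
def IsRootSystem {E : Type*} [NormedAddCommGroup E] [InnerProductSpace ℝ E]
    (R : Set E) : Prop :=
  R.Finite ∧ (0 : E) ∉ R ∧
  (∀ α ∈ R, ∀ β ∈ R, ∃ n : ℤ, 2 * ⟪β, α⟫ / ⟪α, α⟫ = (n : ℝ)) ∧
  (∀ α ∈ R, ∀ β ∈ R, β - (2 * ⟪β, α⟫ / ⟪α, α⟫) • α ∈ R) ∧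
  (∀ α ∈ R, ∀ t : ℝ, t • α ∈ R → t = 1 ∨ t = -1)

/-- `S` is a base (simple system) of the root system `R`: a linearly independent
subset such that every root is an integer linear combination of elements of `S`
with coefficients all nonnegative or all nonpositive. -/
def IsBase {E : Type*} [NormedAddCommGroup E] [InnerProductSpace ℝ E]
    (R S : Set E) : Prop :=
  S ⊆ R ∧ LinearIndependent ℝ ((↑) : S → E) ∧
  ∀ β ∈ R, ∃ c : E →₀ ℤ, ↑c.support ⊆ S ∧
    β = c.sum (fun α n => (n : ℝ) • α) ∧
    ((∀ α, 0 ≤ c α) ∨ (∀ α, c α ≤ 0))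

section RootSystem

variable {E : Type*} [NormedAddCommGroup E] [InnerProductSpace ℝ E]

section Obtuse

variable {T : Set E} {H : E}

lemma coeff_nonpos_of_linearCombination_eq_zero (hpos : ∀ v ∈ T, 0 < ⟪v, H⟫)
    (hobtuse : T.Pairwise fun v w => ⟪v, w⟫ ≤ 0) {l : E →₀ ℝ}
    (hl : l ∈ Finsupp.supported ℝ ℝ T) (hsum : Finsupp.linearCombination ℝ id l = 0) (v : E) :
    l v ≤ 0 := by
  classical
  set P := l.support.filter (0 < l ·)
  set N := l.support.filter (¬ 0 < l ·)
  set u := ∑ x ∈ P, l x • x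
  have hu : u = ∑ y ∈ N, (-l y) • y := by
    rw [Finsupp.linearCombination_apply, Finsupp.sum,
      ← Finset.sum_filter_add_sum_filter_not _ (0 < l ·)] at hsum
    simp only [neg_smul, Finset.sum_neg_distrib]
    exact eq_neg_of_add_eq_zero_left hsum
  have hu0 : u = 0 := by
    refine real_inner_self_nonpos.mp ?_
    calc ⟪u, u⟫ = ⟪∑ x ∈ P, l x • x, ∑ y ∈ N, (-l y) • y⟫ := by rw [← hu]
      _ = ∑ x ∈ P, ∑ y ∈ N, l x * -l y * ⟪x, y⟫ := by
          rw [sum_inner]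
          simp only [inner_sum, real_inner_smul_left, real_inner_smul_right]
          exact Finset.sum_congr rfl fun x _ => Finset.sum_congr rfl fun y _ => by ring
      _ ≤ 0 := by
          refine Finset.sum_nonpos fun x hx => Finset.sum_nonpos fun y hy => ?_
          simp only [P, N, Finset.mem_filter] at hx hy
          refine mul_nonpos_of_nonneg_of_nonpos (mul_nonneg hx.2.le (by linarith [hy.2]))
            (hobtuse (hl hx.1) (hl hy.1) ?_)
          rintro rfl
          exact hy.2 hx.2
  by_contra! hv
  have hvP : v ∈ P := by simp [P, hv, hv.ne']
  have : 0 < ⟪u, H⟫ := by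
    rw [sum_inner]
    refine Finset.sum_pos (fun x hx => ?_) ⟨v, hvP⟩
    simp only [P, Finset.mem_filter] at hx
    rw [real_inner_smul_left]
    exact mul_pos hx.2 (hpos x (hl hx.1))
  simp [hu0] at this

theorem linearIndependent_of_inner_pos_of_pairwise_inner_nonpos (hpos : ∀ v ∈ T, 0 < ⟪v, H⟫)
    (hobtuse : T.Pairwise fun v w => ⟪v, w⟫ ≤ 0) :
    LinearIndependent ℝ ((↑) : T → E) := by
  rw [linearIndependent_subtype_iff, linearIndepOn_iff]
  intro l hl hsum
  ext v
  have hneg := coeff_nonpos_of_linearCombination_eq_zero hpos hobtuse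
    (Submodule.neg_mem _ hl) (by simp [hsum]) v
  exact le_antisymm (coeff_nonpos_of_linearCombination_eq_zero hpos hobtuse hl hsum v)
    (by simpa using hneg)

end Obtuse

namespace IsRootSystem

variable {R : Set E} {α β : E}

lemma inner_self_pos (hR : IsRootSystem R) (hα : α ∈ R) : 0 < ⟪α, α⟫ :=
  real_inner_self_pos.mpr (ne_of_mem_of_not_mem hα hR.2.1)

lemma neg_mem (hR : IsRootSystem R) (hα : α ∈ R) : -α ∈ R := by
  have := hR.2.2.2.1 α hα α hα
  rwa [mul_div_assoc, div_self (hR.inner_self_pos hα).ne', mul_one, two_smul,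
    sub_add_cancel_left] at this

lemma sub_mem_of_cartan_eq_one (hR : IsRootSystem R) (hα : α ∈ R) (hβ : β ∈ R)
    (h : 2 * ⟪α, β⟫ / ⟪β, β⟫ = 1) : α - β ∈ R := by
  have := hR.2.2.2.1 β hβ α hα
  rwa [h, one_smul] at this

lemma sub_mem (hR : IsRootSystem R) (hα : α ∈ R) (hβ : β ∈ R) (hne : α ≠ β)
    (hinner : 0 < ⟪α, β⟫) : α - β ∈ R := by
  have hαα := hR.inner_self_pos hα
  have hββ := hR.inner_self_pos hβ
  obtain ⟨n, hn⟩ := hR.2.2.1 β hβ α hα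
  obtain ⟨m, hm⟩ := hR.2.2.1 α hα β hβ
  rw [real_inner_comm] at hm
  have hn0 : (0 : ℝ) < n := hn ▸ by positivity
  have hm0 : (0 : ℝ) < m := hm ▸ by positivity
  have : n = 1 ∨ m = 1 ∨ (2 ≤ n ∧ 2 ≤ m) := by
    have : 0 < n := by exact_mod_cast hn0
    have : 0 < m := by exact_mod_cast hm0
    omega
  rcases this with hn1 | hm1 | ⟨hn2, hm2⟩
  · exact hR.sub_mem_of_cartan_eq_one hα hβ (by rw [hn, hn1, Int.cast_one])
  · have hβα := hR.sub_mem_of_cartan_eq_one hβ hα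
      (by rw [real_inner_comm, hm, hm1, Int.cast_one])
    simpa using hR.neg_mem hβα
  · -- both Cartan numbers `≥ 2` force `‖α - β‖² ≤ 0`
    have hβ_le : ⟪β, β⟫ ≤ ⟪α, β⟫ := by
      have : (2 : ℝ) ≤ 2 * ⟪α, β⟫ / ⟪β, β⟫ := hn ▸ by exact_mod_cast hn2
      rw [le_div_iff₀ hββ] at this
      linarith
    have hα_le : ⟪α, α⟫ ≤ ⟪α, β⟫ := by
      have : (2 : ℝ) ≤ 2 * ⟪α, β⟫ / ⟪α, α⟫ := hm ▸ by exact_mod_cast hm2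
      rw [le_div_iff₀ hαα] at this
      linarith
    refine absurd (sub_eq_zero.mp (real_inner_self_nonpos.mp ?_)) hne
    rw [inner_sub_left, inner_sub_right, inner_sub_right, real_inner_comm α β]
    linarith

end IsRootSystem

lemma IsBase.inner_ne_zero {R S : Set E} {H γ : E} (hR0 : (0 : E) ∉ R) (hS : IsBase R S)
    (hH : ∀ α ∈ S, 0 < ⟪α, H⟫) (hγ : γ ∈ R) : ⟪γ, H⟫ ≠ 0 := by
  obtain ⟨c, hcS, rfl, hsign⟩ := hS.2.2 γ hγ
  have hc : c.support.Nonempty := by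
    rw [Finset.nonempty_iff_ne_empty, Ne, Finsupp.support_eq_empty]
    rintro rfl
    exact hR0 (by simpa using hγ)
  have hinner : ⟪c.sum (fun α n => (n : ℝ) • α), H⟫ = ∑ α ∈ c.support, (c α : ℝ) * ⟪α, H⟫ := by
    simp only [Finsupp.sum, sum_inner, real_inner_smul_left]
  rw [hinner]
  rcases hsign with hs | hs
  · refine (Finset.sum_pos (fun α hα => mul_pos ?_ (hH α (hcS hα))) hc).ne'
    exact_mod_cast (hs α).lt_of_ne' (Finsupp.mem_support_iff.mp hα)
  · refine (Finset.sum_neg (fun α hα => mul_neg_of_neg_of_pos ?_ (hH α (hcS hα))) hc).ne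
    exact_mod_cast (hs α).lt_of_ne (Finsupp.mem_support_iff.mp hα)

lemma IsBase.inner_nonpos_of_inner_eq {R S : Set E} {H α β : E} (hR : IsRootSystem R)
    (hS : IsBase R S) (hH : ∀ α ∈ S, 0 < ⟪α, H⟫) (hα : α ∈ R) (hβ : β ∈ R) (hne : α ≠ β)
    (hαβ : ⟪α, H⟫ = ⟪β, H⟫) : ⟪α, β⟫ ≤ 0 := by
  by_contra! h
  exact hS.inner_ne_zero hR.2.1 hH (hR.sub_mem hα hβ hne h) (by rw [inner_sub_left, hαβ, sub_self])

end RootSystem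

theorem SH_linearIndependent_general
    {E : Type*} [NormedAddCommGroup E] [InnerProductSpace ℝ E]
    (R S : Set E) (hR : IsRootSystem R) (hS : IsBase R S)
    (H : E) (hH : ∀ α ∈ S, 0 < ⟪α, H⟫) :
    LinearIndependent ℝ ((↑) : {α : E | α ∈ R ∧ ⟪α, H⟫ = 2} → E) :=
  linearIndependent_of_inner_pos_of_pairwise_inner_nonpos (H := H)
    (fun _ hα => hα.2 ▸ two_pos)
    fun _ hα _ hβ hne => hS.inner_nonpos_of_inner_eq hR hH hα.1 hβ.1 hne (hα.2.trans hβ.2.symm)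

/-- For `H` in the open fundamental Weyl chamber, the set
`S(H) = {α ∈ R : ⟪α,H⟫ = 2}` is linearly independent. -/
theorem SH_linearIndependent
    {E : Type*} [NormedAddCommGroup E] [InnerProductSpace ℝ E] [FiniteDimensional ℝ E]
    (R S : Set E) (hR : IsRootSystem R) (hS : IsBase R S)
    (H : E) (hH : ∀ α ∈ S, 0 < ⟪α, H⟫) :
    LinearIndependent ℝ ((↑) : {α : E | α ∈ R ∧ ⟪α, H⟫ = 2} → E) :=
  SH_linearIndependent_general R S hR hS H hH
end

section
/- Let w : ℝ → ℂ be a differentiable function with w(r) ≠ 0 for all r, and suppose that w(r)·(conj ∘ w)'(r) − conj(w(r))·w'(r) = 0 for all r ∈ ℝ. Then w is real up to a constant phase: there exist a constant c ∈ ℂ with |c| = 1 and a function u : ℝ → ℝ such that w(r) = c·u(r) for all r. -/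
/-!
The hypothesis says, up to sign, that the Wronskian of `w` and `conj ∘ w` vanishes, so by the
quotient rule `w / conj w` is constant, equal to `c / conj c` for the phase `c = w 0 / ‖w 0‖`.
Cross-multiplying, `w r * conj c` equals its own conjugate, hence is real, and
`w r = c * (w r * conj c)` because `‖c‖ = 1`.
-/

open ComplexConjugate

theorem div_eq_div_of_deriv_mul_sub_mul_deriv_eq_zero {𝕜 𝕜' : Type*} [RCLike 𝕜]
    [NontriviallyNormedField 𝕜'] [NormedAlgebra 𝕜 𝕜'] {f g : 𝕜 → 𝕜'}
    (hf : Differentiable 𝕜 f) (hg : Differentiable 𝕜 g) (hg₀ : ∀ x, g x ≠ 0)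
    (hW : ∀ x, deriv f x * g x - f x * deriv g x = 0) (x y : 𝕜) :
    f x / g x = f y / g y :=
  is_const_of_deriv_eq_zero (fun z => (hf z).div (hg z) (hg₀ z))
    (fun z => by rw [deriv_div (hf z) (hg z) (hg₀ z), hW, zero_div]) x y

namespace Complex

theorem im_mul_conj_eq_zero_of_div_conj_eq {z c : ℂ} (hz : z ≠ 0) (hc : c ≠ 0)
    (h : z / conj z = c / conj c) : (z * conj c).im = 0 := by
  rw [← conj_eq_iff_im, map_mul, conj_conj]
  rw [div_eq_div_iff ((map_ne_zero _).2 hz) ((map_ne_zero _).2 hc)] at h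
  linear_combination -h

theorem eq_mul_re_mul_conj {z c : ℂ} (hc : ‖c‖ = 1) (h : (z * conj c).im = 0) :
    z = c * ((z * conj c).re : ℝ) := by
  rw [conj_eq_iff_re.1 (conj_eq_iff_im.2 h), mul_left_comm, mul_conj', hc]
  simp

end Complex

/-- A nowhere-vanishing differentiable function `w : ℝ → ℂ` satisfying
`w·(conj ∘ w)' − conj(w)·w' = 0` is real up to a constant phase: `w = c·u` for a
unimodular constant `c ∈ ℂ` and a real-valued function `u`. -/
theorem real_up_to_phase_of_wronskian_zero
    (w : ℝ → ℂ) (hdiff : Differentiable ℝ w) (hnz : ∀ r : ℝ, w r ≠ 0)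
    (h : ∀ r : ℝ,
      w r * deriv (fun t => starRingEnd ℂ (w t)) r - starRingEnd ℂ (w r) * deriv w r = 0) :
    ∃ c : ℂ, ‖c‖ = 1 ∧ ∃ u : ℝ → ℝ, ∀ r : ℝ, w r = c * (u r : ℂ) := by
  have hquot : ∀ r, w r / conj (w r) = w 0 / conj (w 0) := fun r =>
    div_eq_div_of_deriv_mul_sub_mul_deriv_eq_zero (g := fun t => conj (w t)) hdiff hdiff.star
      (fun r => (map_ne_zero _).2 (hnz r)) (fun r => by linear_combination -h r) r 0
  have hw₀ : (‖w 0‖ : ℂ) ≠ 0 := Complex.ofReal_ne_zero.2 (norm_ne_zero_iff.2 (hnz 0))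
  set c : ℂ := w 0 / ‖w 0‖
  have hc : ‖c‖ = 1 := by simp [c, hnz 0]
  have hc_quot : w 0 / conj (w 0) = c / conj c := by
    rw [map_div₀, Complex.conj_ofReal, div_div_div_cancel_right₀ hw₀]
  refine ⟨c, hc, fun r => (w r * conj c).re, fun r => Complex.eq_mul_re_mul_conj hc ?_⟩
  exact Complex.im_mul_conj_eq_zero_of_div_conj_eq (hnz r) (div_ne_zero (hnz 0) hw₀)
    ((hquot r).trans hc_quot)
end
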